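/- arXiv:math-ph/0609046 — 2 statements merged into one kernel-verified Lean document; each statement's English description precedes it below -/
import Mathlib

section
/- Let (Y, ℬ(Y), P) be a probability space, a, a' : Y → (0, ∞) measurable with ∫ a dP = ∫ a' dP = 1, and b, c : Y → (0, ∞) bounded measurable with inf_{y∈Y} c(y) > 0, and suppose there exists y₀ ∈ Y with c(y₀) = inf_{y∈Y} c(y). Let γ, ε, δ > 0 be such that |a(y)/a'(y) − 1| ≤ γ, |c(y)/c(y₀) − 1| ≤ ε, and |b(y)/c(y) − 1| ≤ δ for all y ∈ Y. Then |(∫ a b dP) / (∫ a' c dP) − 1| ≤ δ + εγ + δεγ. -/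
/-!
Write `c₀ = c y₀`, `I = ∫ a b`, `J = ∫ a' c` and `K = ∫ a c`. Since `∫ a = ∫ a'`, subtracting the
constant `c₀` from `c` does not change `K - J`, so
`I - J = ∫ a (b - c) + ∫ (a - a') (c - c₀)`.
Pointwise `|b - c| ≤ δ c`, `|a - a'| ≤ γ a'` and, as `c₀` is the minimum of `c`,
`|c - c₀| ≤ ε c₀ ≤ ε c`. Hence the second integral is at most `γ ε J` in absolute value, which
also gives `K ≤ (1 + γ ε) J`, and the first is at most `δ K ≤ δ (1 + γ ε) J`.
-/

open MeasureTheory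

theorem abs_div_sub_one_le_iff {x y r : ℝ} (hy : 0 < y) : |x / y - 1| ≤ r ↔ |x - y| ≤ r * y := by
  rw [div_sub_one hy.ne', abs_div, abs_of_pos hy, div_le_iff₀ hy]

section

variable {Y : Type*} [MeasurableSpace Y] {μ : Measure Y} {a a' b c : Y → ℝ}

theorem integral_pos_of_forall_pos [NeZero μ] (hf : ∀ y, 0 < a y) (hfi : Integrable a μ) :
    0 < ∫ y, a y ∂μ := by
  have hsupp : Function.support a = Set.univ := Set.eq_univ_of_forall fun y => (hf y).ne'
  rw [integral_pos_iff_support_of_nonneg (fun y => (hf y).le) hfi, hsupp]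
  exact Measure.measure_univ_pos.mpr (NeZero.ne μ)

theorem MeasureTheory.Integrable.mul_of_bddAbove_range_of_pos (ha : Integrable a μ)
    (hc : Measurable c) (hcpos : ∀ y, 0 < c y) (hcbd : BddAbove (Set.range c)) :
    Integrable (fun y => a y * c y) μ := by
  obtain ⟨C, hC⟩ := hcbd
  refine ha.mul_bdd (c := C) hc.aestronglyMeasurable (ae_of_all _ fun y => ?_)
  rw [Real.norm_eq_abs, abs_of_pos (hcpos y)]
  exact hC ⟨y, rfl⟩

theorem integral_sub_mul_sub_const (ha : Integrable a μ) (ha' : Integrable a' μ)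
    (hac : Integrable (fun y => a y * c y) μ) (ha'c : Integrable (fun y => a' y * c y) μ)
    (haa' : ∫ y, a y ∂μ = ∫ y, a' y ∂μ) (c₀ : ℝ) :
    ∫ y, (a y - a' y) * (c y - c₀) ∂μ = ∫ y, a y * c y ∂μ - ∫ y, a' y * c y ∂μ := by
  have hexpand : (fun y => (a y - a' y) * (c y - c₀)) =
      fun y => (a y * c y - a' y * c y) - c₀ * (a y - a' y) := by
    funext y; ring
  have hdiff : Integrable (fun y => a y * c y - a' y * c y) μ := hac.sub ha'c
  have hconst : Integrable (fun y => c₀ * (a y - a' y)) μ := (ha.sub ha').const_mul c₀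
  rw [hexpand, integral_sub hdiff hconst, integral_sub hac ha'c,
    integral_const_mul, integral_sub ha ha', haa', sub_self, mul_zero, sub_zero]

theorem abs_integral_mul_sub_le {δ : ℝ} (hac : Integrable (fun y => a y * c y) μ)
    (hapos : ∀ y, 0 ≤ a y) (hbc : ∀ y, |b y - c y| ≤ δ * c y) :
    |∫ y, a y * (b y - c y) ∂μ| ≤ δ * ∫ y, a y * c y ∂μ := by
  rw [← integral_const_mul δ, ← Real.norm_eq_abs]
  refine norm_integral_le_of_norm_le (hac.const_mul δ) (ae_of_all _ fun y => ?_)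
  rw [Real.norm_eq_abs, abs_mul, abs_of_nonneg (hapos y), mul_left_comm]
  exact mul_le_mul_of_nonneg_left (hbc y) (hapos y)

theorem abs_integral_sub_mul_sub_const_le {γ ε c₀ : ℝ}
    (ha'c : Integrable (fun y => a' y * c y) μ)
    (haa' : ∀ y, |a y - a' y| ≤ γ * a' y) (hcc : ∀ y, |c y - c₀| ≤ ε * c y) :
    |∫ y, (a y - a' y) * (c y - c₀) ∂μ| ≤ γ * ε * ∫ y, a' y * c y ∂μ := by
  rw [← integral_const_mul (γ * ε), ← Real.norm_eq_abs]
  refine norm_integral_le_of_norm_le (ha'c.const_mul _) (ae_of_all _ fun y => ?_)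
  calc ‖(a y - a' y) * (c y - c₀)‖ = |a y - a' y| * |c y - c₀| := by
        rw [Real.norm_eq_abs, abs_mul]
    _ ≤ (γ * a' y) * (ε * c y) :=
        mul_le_mul (haa' y) (hcc y) (abs_nonneg _) ((abs_nonneg _).trans (haa' y))
    _ = γ * ε * (a' y * c y) := by ring

theorem abs_integral_mul_sub_integral_mul_le {γ ε δ c₀ : ℝ} (ha : Integrable a μ)
    (ha' : Integrable a' μ) (hab : Integrable (fun y => a y * b y) μ)
    (hac : Integrable (fun y => a y * c y) μ) (ha'c : Integrable (fun y => a' y * c y) μ)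
    (hint : ∫ y, a y ∂μ = ∫ y, a' y ∂μ) (hapos : ∀ y, 0 ≤ a y) (hδ : 0 ≤ δ)
    (haa' : ∀ y, |a y - a' y| ≤ γ * a' y) (hcc : ∀ y, |c y - c₀| ≤ ε * c y)
    (hbc : ∀ y, |b y - c y| ≤ δ * c y) :
    |∫ y, a y * b y ∂μ - ∫ y, a' y * c y ∂μ| ≤ (δ + ε * γ + δ * ε * γ) * ∫ y, a' y * c y ∂μ := by
  set J := ∫ y, a' y * c y ∂μ
  set K := ∫ y, a y * c y ∂μ
  have hab_sub : ∫ y, a y * (b y - c y) ∂μ = ∫ y, a y * b y ∂μ - K := by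
    simp_rw [mul_sub]
    exact integral_sub hab hac
  have hcross : ∫ y, (a y - a' y) * (c y - c₀) ∂μ = K - J :=
    integral_sub_mul_sub_const ha ha' hac ha'c hint c₀
  have hab_sub_le := abs_integral_mul_sub_le hac hapos hbc
  have hcross_le := abs_integral_sub_mul_sub_const_le ha'c haa' hcc
  have hK : K ≤ (1 + γ * ε) * J := by
    have := (abs_le.mp hcross_le).2
    linarith
  calc |∫ y, a y * b y ∂μ - J|
      = |∫ y, a y * (b y - c y) ∂μ + ∫ y, (a y - a' y) * (c y - c₀) ∂μ| := by
        rw [hab_sub, hcross, sub_add_sub_cancel]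
    _ ≤ δ * K + γ * ε * J := (abs_add_le _ _).trans (add_le_add hab_sub_le hcross_le)
    _ ≤ δ * ((1 + γ * ε) * J) + γ * ε * J := by gcongr
    _ = (δ + ε * γ + δ * ε * γ) * J := by ring

end

theorem ratio_integral_bound_three_eps_general {Y : Type*} [MeasurableSpace Y]
    (P : Measure Y) [IsProbabilityMeasure P]
    (a a' b c : Y → ℝ)
    (hb : Measurable b) (hc : Measurable c)
    (hapos : ∀ y, 0 < a y) (ha'pos : ∀ y, 0 < a' y)
    (hbpos : ∀ y, 0 < b y) (hcpos : ∀ y, 0 < c y)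
    (hai : Integrable a P) (ha'i : Integrable a' P)
    (ha1 : ∫ y, a y ∂P = 1) (ha'1 : ∫ y, a' y ∂P = 1)
    (hbbd : BddAbove (Set.range b)) (hcbd : BddAbove (Set.range c))
    (y₀ : Y) (hy₀ : c y₀ = ⨅ y, c y)
    (γ ε δ : ℝ) (hε : 0 < ε) (hδ : 0 < δ)
    (haa' : ∀ y, |a y / a' y - 1| ≤ γ)
    (hcc : ∀ y, |c y / c y₀ - 1| ≤ ε)
    (hbc : ∀ y, |b y / c y - 1| ≤ δ) :
    |(∫ y, a y * b y ∂P) / (∫ y, a' y * c y ∂P) - 1| ≤ δ + ε * γ + δ * ε * γ := by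
  have hc_min : ∀ y, c y₀ ≤ c y := fun y =>
    hy₀ ▸ ciInf_le ⟨0, Set.forall_mem_range.mpr fun y => (hcpos y).le⟩ y
  have hcc' : ∀ y, |c y - c y₀| ≤ ε * c y := fun y =>
    ((abs_div_sub_one_le_iff (hcpos y₀)).mp (hcc y)).trans
      (mul_le_mul_of_nonneg_left (hc_min y) hε.le)
  have ha'c := ha'i.mul_of_bddAbove_range_of_pos hc hcpos hcbd
  have hJ : 0 < ∫ y, a' y * c y ∂P :=
    integral_pos_of_forall_pos (fun y => mul_pos (ha'pos y) (hcpos y)) ha'c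
  rw [abs_div_sub_one_le_iff hJ]
  exact abs_integral_mul_sub_integral_mul_le hai ha'i
    (hai.mul_of_bddAbove_range_of_pos hb hbpos hbbd)
    (hai.mul_of_bddAbove_range_of_pos hc hcpos hcbd) ha'c (ha1.trans ha'1.symm)
    (fun y => (hapos y).le) hδ.le
    (fun y => (abs_div_sub_one_le_iff (ha'pos y)).mp (haa' y)) hcc'
    (fun y => (abs_div_sub_one_le_iff (hcpos y)).mp (hbc y))

/-- Estimate (31): if `a, a'` are positive measurable with `∫ a dP = ∫ a' dP = 1`, `b, c`
positive bounded measurable, `c` attains its positive infimum at some `y₀`, and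
`|a/a' − 1| ≤ γ`, `|c/c(y₀) − 1| ≤ ε`, `|b/c − 1| ≤ δ` pointwise, then
`|(∫ ab dP)/(∫ a'c dP) − 1| ≤ δ + εγ + δεγ`. -/
theorem ratio_integral_bound_three_eps {Y : Type*} [MeasurableSpace Y]
    (P : Measure Y) [IsProbabilityMeasure P]
    (a a' b c : Y → ℝ)
    (ha : Measurable a) (ha' : Measurable a') (hb : Measurable b) (hc : Measurable c)
    (hapos : ∀ y, 0 < a y) (ha'pos : ∀ y, 0 < a' y)
    (hbpos : ∀ y, 0 < b y) (hcpos : ∀ y, 0 < c y)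
    (hai : Integrable a P) (ha'i : Integrable a' P)
    (ha1 : ∫ y, a y ∂P = 1) (ha'1 : ∫ y, a' y ∂P = 1)
    (hbbd : BddAbove (Set.range b)) (hcbd : BddAbove (Set.range c))
    (hcinf : 0 < ⨅ y, c y)
    (y₀ : Y) (hy₀ : c y₀ = ⨅ y, c y)
    (γ ε δ : ℝ) (hγ : 0 < γ) (hε : 0 < ε) (hδ : 0 < δ)
    (haa' : ∀ y, |a y / a' y - 1| ≤ γ)
    (hcc : ∀ y, |c y / c y₀ - 1| ≤ ε)
    (hbc : ∀ y, |b y / c y - 1| ≤ δ) :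
    |(∫ y, a y * b y ∂P) / (∫ y, a' y * c y ∂P) - 1| ≤ δ + ε * γ + δ * ε * γ :=
  ratio_integral_bound_three_eps_general P a a' b c hb hc hapos ha'pos hbpos hcpos hai ha'i ha1 ha'1
    hbbd hcbd y₀ hy₀ γ ε δ hε hδ haa' hcc hbc
end

section
/- For every bounded continuous function f : X → ℝ and every finite non-void Λ ⊂ L, the function y ↦ π_Λ(f|y) = Z_Λ(y)^{-1} ∫_{X_Λ} f(x_Λ × y_{Λᶜ}) exp[V_Λ(x_Λ|y)] χ_Λ(dx_Λ) is a bounded continuous function on X (with the product topology); that is, the local Gibbs specification {π_Λ} has the Feller property. -/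
open MeasureTheory

noncomputable section

/-- The loop space over `M`: continuous paths on `[0,1]` with equal endpoints,
with the supremum metric. -/
def Loop (M : Type*) [TopologicalSpace M] : Type _ :=
  {x : C(unitInterval, M) // x 0 = x 1}

variable {M : Type*} [MetricSpace M]

instance : MetricSpace (Loop M) :=
  inferInstanceAs (MetricSpace {x : C(unitInterval, M) // x 0 = x 1})

instance : MeasurableSpace (Loop M) := borel _

instance : BorelSpace (Loop M) := ⟨rfl⟩

/-- The underlying continuous path of a loop. -/
def Loop.path : Loop M → C(unitInterval, M) := Subtype.val

/-- `V(x,y) = ∫₀¹ v(x(τ), y(τ)) dτ`, the time-averaged pair interaction. -/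
def pathV (v : C(M × M, ℝ)) (x y : Loop M) : ℝ :=
  ∫ τ : unitInterval, v (x.path τ, y.path τ)

variable {L : Type*} [DecidableEq L] (G : SimpleGraph L) [DecidableRel G.Adj]
  [G.LocallyFinite] (χ : L → Measure (Loop M)) (v : L → L → C(M × M, ℝ))

/-- The configuration `x_Λ × y_{Λᶜ}`. -/
def Finset.glue (Λ : Finset L) (x : Λ → Loop M) (y : (ℓ : L) → Loop M) (ℓ : L) : Loop M :=
  if h : ℓ ∈ Λ then x ⟨ℓ, h⟩ else y ℓ

/-- The product measure `χ_Λ = ⊗_{ℓ ∈ Λ} χ_ℓ`. -/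
def chiProd (Λ : Finset L) : Measure (Λ → Loop M) :=
  Measure.pi fun ℓ : Λ => χ ℓ

/-- `V_Λ(x_Λ | y)`: interaction energy of `x_Λ` inside `Λ` plus its interaction with
the boundary condition `y` outside `Λ`.  (Each unordered interior edge is counted twice in
the double sum, whence the factor 1/2.) -/
def condV (Λ : Finset L) (x : Λ → Loop M) (y : (ℓ : L) → Loop M) : ℝ :=
  (1 / 2) * ∑ ℓ : Λ, ∑ ℓ' : Λ,
      (if G.Adj ℓ ℓ' then pathV (v ℓ ℓ') (x ℓ) (x ℓ') else 0)
    + ∑ ℓ : Λ, ∑ ℓ' ∈ G.neighborFinset (ℓ : L) \ Λ, pathV (v ℓ ℓ') (x ℓ) (y ℓ')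

/-- The local Gibbs kernel `π_Λ(dx | y)` as a measure on configuration space. -/
def gibbsKernel (Λ : Finset L) (y : (ℓ : L) → Loop M) : Measure ((ℓ : L) → Loop M) :=
  (∫⁻ x, ENNReal.ofReal (Real.exp (condV G v Λ x y)) ∂chiProd χ Λ)⁻¹ •
    Measure.map (fun x => Finset.glue Λ x y)
      ((chiProd χ Λ).withDensity fun x => ENNReal.ofReal (Real.exp (condV G v Λ x y)))

/-- `μ` is a Euclidean Gibbs measure: a probability measure satisfying the DLR equation
`μ(B) = ∫ π_Λ(B|x) μ(dx)` for every finite non-void `Λ`. -/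
def IsGibbs (μ : Measure ((ℓ : L) → Loop M)) : Prop :=
  IsProbabilityMeasure μ ∧
    ∀ Λ : Finset L, Λ.Nonempty → μ.bind (gibbsKernel G χ v Λ) = μ

end

noncomputable section

variable {M : Type*} [MetricSpace M] {L : Type*} [DecidableEq L]

/-- `π_Λ(f|y)`: the expectation of `f` under the local Gibbs kernel with boundary
condition `y`. -/
def gibbsExp (G : SimpleGraph L) [DecidableRel G.Adj] [G.LocallyFinite]
    (χ : L → Measure (Loop M)) (v : L → L → C(M × M, ℝ)) (Λ : Finset L)
    (f : ((ℓ : L) → Loop M) → ℝ) (y : (ℓ : L) → Loop M) : ℝ :=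
  (∫ x, f (Finset.glue Λ x y) * Real.exp (condV G v Λ x y) ∂chiProd χ Λ) /
    ∫ x, Real.exp (condV G v Λ x y) ∂chiProd χ Λ


section AuxFeller

variable [CompactSpace M]

lemma continuous_loop_path : Continuous (Loop.path : Loop M → C(unitInterval, M)) :=
  continuous_subtype_val

instance Loop.secondCountable : SecondCountableTopology (Loop M) :=
  inferInstanceAs (SecondCountableTopology {x : C(unitInterval, M) // x 0 = x 1})

lemma continuous_pathV (v : C(M × M, ℝ)) :
    Continuous fun p : Loop M × Loop M => pathV v p.1 p.2 := by
  apply MeasureTheory.continuous_of_dominated (bound := fun _ => ‖v‖)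
  · intro p
    exact (v.continuous.comp (((map_continuous p.1.path).prodMk
      (map_continuous p.2.path)))).aestronglyMeasurable
  · intro p
    exact Filter.Eventually.of_forall fun τ => v.norm_coe_le_norm _
  · exact MeasureTheory.integrable_const _
  · refine Filter.Eventually.of_forall fun τ => ?_
    exact v.continuous.comp ((((continuous_eval_const τ).comp
      (continuous_loop_path.comp continuous_fst)).prodMk
      ((continuous_eval_const τ).comp
      (continuous_loop_path.comp continuous_snd))))

lemma abs_pathV_le (v : C(M × M, ℝ)) (x y : Loop M) : |pathV v x y| ≤ ‖v‖ := by
  have := MeasureTheory.norm_integral_le_of_norm_le_const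
    (μ := (MeasureTheory.volume : MeasureTheory.Measure unitInterval))
    (f := fun τ => v (x.path τ, y.path τ)) (C := ‖v‖)
    (Filter.Eventually.of_forall fun τ => v.norm_coe_le_norm _)
  simpa [pathV, Real.norm_eq_abs, MeasureTheory.measure_univ] using this

lemma continuous_glue (Λ : Finset L) :
    Continuous fun p : (Λ → Loop M) × ((ℓ : L) → Loop M) => Finset.glue Λ p.1 p.2 := by
  apply continuous_pi
  intro ℓ
  unfold Finset.glue
  by_cases h : ℓ ∈ Λ
  · simp only [dif_pos h]
    exact (continuous_apply _).comp continuous_fst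
  · simp only [dif_neg h]
    exact (continuous_apply _).comp continuous_snd

lemma continuous_condV (G : SimpleGraph L) [DecidableRel G.Adj] [G.LocallyFinite]
    (v : L → L → C(M × M, ℝ)) (Λ : Finset L) :
    Continuous fun p : (Λ → Loop M) × ((ℓ : L) → Loop M) => condV G v Λ p.1 p.2 := by
  unfold condV
  have key : ∀ (w : C(M × M, ℝ)) (g h : ((Λ → Loop M) × ((ℓ : L) → Loop M)) → Loop M),
      Continuous g → Continuous h →
      Continuous fun p : (Λ → Loop M) × ((ℓ : L) → Loop M) => pathV w (g p) (h p) := by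
    intro w g h hg hh
    exact (continuous_pathV w).comp (hg.prodMk hh)
  refine Continuous.add (continuous_const.mul ?_) ?_
  · refine continuous_finset_sum _ fun ℓ _ => continuous_finset_sum _ fun ℓ' _ => ?_
    by_cases h : G.Adj ℓ ℓ'
    · simp only [if_pos h]
      exact key (v ℓ ℓ') _ _ ((continuous_apply (ℓ : Λ)).comp continuous_fst)
        ((continuous_apply (ℓ' : Λ)).comp continuous_fst)
    · simp only [if_neg h]; exact continuous_const
  · refine continuous_finset_sum _ fun ℓ _ => continuous_finset_sum _ fun ℓ' _ => ?_
    exact key (v ℓ ℓ') _ _ ((continuous_apply (ℓ : Λ)).comp continuous_fst)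
      ((continuous_apply ℓ').comp continuous_snd)

lemma abs_condV_le (G : SimpleGraph L) [DecidableRel G.Adj] [G.LocallyFinite]
    (v : L → L → C(M × M, ℝ)) (Λ : Finset L) (x : Λ → Loop M) (y : (ℓ : L) → Loop M) :
    |condV G v Λ x y| ≤
      (1 / 2) * ∑ ℓ : Λ, ∑ ℓ' : Λ, ‖v ℓ ℓ'‖
        + ∑ ℓ : Λ, ∑ ℓ' ∈ G.neighborFinset (ℓ : L) \ Λ, ‖v ℓ ℓ'‖ := by
  unfold condV
  refine (abs_add_le _ _).trans (add_le_add ?_ ?_)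
  · rw [abs_mul, abs_of_nonneg (by norm_num : (0:ℝ) ≤ 1 / 2)]
    refine mul_le_mul_of_nonneg_left ?_ (by norm_num)
    refine (Finset.abs_sum_le_sum_abs _ _).trans (Finset.sum_le_sum fun ℓ _ => ?_)
    refine (Finset.abs_sum_le_sum_abs _ _).trans (Finset.sum_le_sum fun ℓ' _ => ?_)
    by_cases h : G.Adj ℓ ℓ'
    · simpa [h] using abs_pathV_le (v ℓ ℓ') (x ℓ) (x ℓ')
    · simp [h]
  · refine (Finset.abs_sum_le_sum_abs _ _).trans (Finset.sum_le_sum fun ℓ _ => ?_)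
    refine (Finset.abs_sum_le_sum_abs _ _).trans (Finset.sum_le_sum fun ℓ' _ => ?_)
    exact abs_pathV_le _ _ _

end AuxFeller

/-- The Feller property of the local Gibbs specification: for every bounded continuous
`f : X → ℝ` and every finite non-void `Λ ⊂ L`, the function `y ↦ π_Λ(f|y)` is a bounded
continuous function on `X` (with the product topology). -/
theorem gibbsExp_bounded_continuous
    {L : Type} [Countable L] [DecidableEq L]
    (G : SimpleGraph L) [DecidableRel G.Adj] [G.LocallyFinite]
    (M : Type) [MetricSpace M] [CompactSpace M]
    (χ : L → Measure (Loop M)) (hχ : ∀ ℓ, IsProbabilityMeasure (χ ℓ))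
    (v : L → L → C(M × M, ℝ))
    (hvsymm : ∀ ℓ ℓ', v ℓ ℓ' = v ℓ' ℓ)
    (hvsymm' : ∀ ℓ ℓ' (ξ η : M), v ℓ ℓ' (ξ, η) = v ℓ ℓ' (η, ξ))
    (Λ : Finset L) (hΛ : Λ.Nonempty)
    (f : ((ℓ : L) → Loop M) → ℝ) (hf : Continuous f) (C : ℝ) (hfC : ∀ x, |f x| ≤ C) :
    Continuous (gibbsExp G χ v Λ f) ∧ ∃ C' : ℝ, ∀ y, |gibbsExp G χ v Λ f y| ≤ C' := by
  obtain ⟨ℓ0, hℓ0⟩ := hΛ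
  haveI := hχ ℓ0
  have hne : Nonempty (Loop M) := by
    by_contra h
    rw [not_nonempty_iff] at h
    have h1 : (χ ℓ0) Set.univ = 1 := measure_univ
    rw [Set.univ_eq_empty_iff.mpr h, measure_empty] at h1
    exact zero_ne_one h1
  have hC : 0 ≤ C := (abs_nonneg _).trans (hfC (fun _ => Classical.arbitrary _))
  haveI : ∀ ℓ : Λ, IsProbabilityMeasure (χ ℓ) := fun ℓ => hχ ℓ
  haveI : IsProbabilityMeasure (chiProd χ Λ) := by
    unfold chiProd; infer_instance
  set B : ℝ := (1 / 2) * ∑ ℓ : Λ, ∑ ℓ' : Λ, ‖v ℓ ℓ'‖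
      + ∑ ℓ : Λ, ∑ ℓ' ∈ G.neighborFinset (ℓ : L) \ Λ, ‖v ℓ ℓ'‖ with hBdef
  have hbound : ∀ x y, |condV G v Λ x y| ≤ B := fun x y => abs_condV_le G v Λ x y
  have hexp : ∀ x y, Real.exp (condV G v Λ x y) ≤ Real.exp B :=
    fun x y => Real.exp_le_exp.mpr ((le_abs_self _).trans (hbound x y))
  have hexp' : ∀ x y, Real.exp (-B) ≤ Real.exp (condV G v Λ x y) :=
    fun x y => Real.exp_le_exp.mpr ((abs_le.mp (hbound x y)).1)
  have hcondx : ∀ y, Continuous fun x : Λ → Loop M => condV G v Λ x y := by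
    intro y
    have h2 : Continuous fun x : Λ → Loop M => (x, y) := continuous_id.prodMk continuous_const
    have h1 := (continuous_condV G v Λ).comp h2
    exact h1
  have hcondy : ∀ x, Continuous fun y : (ℓ : L) → Loop M => condV G v Λ x y := by
    intro x
    have h2 : Continuous fun y : (ℓ : L) → Loop M => (x, y) :=
      continuous_const.prodMk continuous_id
    have h1 := (continuous_condV G v Λ).comp h2
    exact h1
  have hgluex : ∀ y, Continuous fun x : Λ → Loop M => Finset.glue Λ x y := by
    intro y
    have h2 : Continuous fun x : Λ → Loop M => (x, y) := continuous_id.prodMk continuous_const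
    have h1 := (continuous_glue Λ).comp h2
    exact h1
  have hgluey : ∀ x, Continuous fun y : (ℓ : L) → Loop M => Finset.glue Λ x y := by
    intro x
    have h2 : Continuous fun y : (ℓ : L) → Loop M => (x, y) :=
      continuous_const.prodMk continuous_id
    have h1 := (continuous_glue Λ).comp h2
    exact h1
  have hcontDx : ∀ y, Continuous fun x : Λ → Loop M => Real.exp (condV G v Λ x y) :=
    fun y => Real.continuous_exp.comp (hcondx y)
  have hcontDy : ∀ x, Continuous fun y : (ℓ : L) → Loop M => Real.exp (condV G v Λ x y) :=
    fun x => Real.continuous_exp.comp (hcondy x)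
  have hcontNx : ∀ y, Continuous fun x : Λ → Loop M =>
      f (Finset.glue Λ x y) * Real.exp (condV G v Λ x y) :=
    fun y => (hf.comp (hgluex y)).mul (hcontDx y)
  have hcontNy : ∀ x, Continuous fun y : (ℓ : L) → Loop M =>
      f (Finset.glue Λ x y) * Real.exp (condV G v Λ x y) :=
    fun x => (hf.comp (hgluey x)).mul (hcontDy x)
  have hnbD : ∀ x y, ‖Real.exp (condV G v Λ x y)‖ ≤ Real.exp B := by
    intro x y
    rw [Real.norm_eq_abs, abs_of_pos (Real.exp_pos _)]
    exact hexp x y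
  have hnbN : ∀ x y, ‖f (Finset.glue Λ x y) * Real.exp (condV G v Λ x y)‖
      ≤ C * Real.exp B := by
    intro x y
    rw [Real.norm_eq_abs, abs_mul, abs_of_pos (Real.exp_pos _)]
    exact mul_le_mul (hfC _) (hexp x y) (Real.exp_pos _).le hC
  have hintD : ∀ y, Integrable (fun x => Real.exp (condV G v Λ x y)) (chiProd χ Λ) :=
    fun y => ⟨(hcontDx y).aestronglyMeasurable,
      HasFiniteIntegral.of_bounded (C := Real.exp B)
        (Filter.Eventually.of_forall fun x => hnbD x y)⟩
  have hD : ∀ y, Real.exp (-B) ≤ ∫ x, Real.exp (condV G v Λ x y) ∂chiProd χ Λ := by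
    intro y
    have h1 : ∫ _ : Λ → Loop M, Real.exp (-B) ∂chiProd χ Λ = Real.exp (-B) := by
      simp [integral_const, measure_univ]
    rw [← h1]
    exact integral_mono (integrable_const _) (hintD y) fun x => hexp' x y
  have hDpos : ∀ y, 0 < ∫ x, Real.exp (condV G v Λ x y) ∂chiProd χ Λ :=
    fun y => lt_of_lt_of_le (Real.exp_pos _) (hD y)
  have hcontD : Continuous fun y => ∫ x, Real.exp (condV G v Λ x y) ∂chiProd χ Λ := by
    apply continuous_of_dominated (bound := fun _ => Real.exp B)
    · exact fun y => (hcontDx y).aestronglyMeasurable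
    · exact fun y => Filter.Eventually.of_forall fun x => hnbD x y
    · exact integrable_const _
    · exact Filter.Eventually.of_forall fun x => hcontDy x
  have hcontN : Continuous fun y =>
      ∫ x, f (Finset.glue Λ x y) * Real.exp (condV G v Λ x y) ∂chiProd χ Λ := by
    apply continuous_of_dominated (bound := fun _ => C * Real.exp B)
    · exact fun y => (hcontNx y).aestronglyMeasurable
    · exact fun y => Filter.Eventually.of_forall fun x => hnbN x y
    · exact integrable_const _
    · exact Filter.Eventually.of_forall fun x => hcontNy x
  constructor
  · unfold gibbsExp
    exact hcontN.div hcontD fun y => (hDpos y).ne'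
  · refine ⟨C * Real.exp B / Real.exp (-B), fun y => ?_⟩
    unfold gibbsExp
    rw [abs_div, abs_of_pos (hDpos y)]
    refine div_le_div₀ (mul_nonneg hC (Real.exp_pos B).le) ?_ (Real.exp_pos _) (hD y)
    have := norm_integral_le_of_norm_le_const (μ := chiProd χ Λ)
      (f := fun x => f (Finset.glue Λ x y) * Real.exp (condV G v Λ x y))
      (C := C * Real.exp B) (Filter.Eventually.of_forall fun x => hnbN x y)
    simpa [Real.norm_eq_abs, measure_univ] using this

end
end
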